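/- arXiv:2110.08482 — 4 statements merged into one kernel-verified Lean document; each statement's English description precedes it below -/
import Mathlib

section
/- For every integer g ≥ 1, defining â_j = (−1)^{g−j+1}·((2g+1)/(2j−1))·binom(g+j−1, g−j+1) for j = 1,…,g, the identity x + x + Σ_{j=1}^g â_j x^{2(1−j)} + x^{−2g} = 2x·(T_{2g+1}(1/(2x)) + 1) holds as Laurent polynomials in x; equivalently F^{â}_{g,g}(x,x) = 2x(T_{2g+1}(1/(2x)) + 1), where F^{a}_{g,g}(x,y) = x + y + Σ_{j=1}^g a_j x^{1−j} y^{1−j} + x^{−g} y^{−g}. -/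
open Polynomial

/-- Integer-form coefficients. -/
noncomputable def Ahat (g j : ℕ) : ℝ :=
  (-1) ^ (g - j + 1) * (((g + j).choose (g - j + 1) : ℝ) + ((g + j - 1).choose (g - j) : ℝ))

lemma Ahat_one (m : ℕ) : Ahat (m + 1) 1 = (-1) ^ (m + 1) * (2 * (m : ℝ) + 3) := by
  have h1 : m + 1 + 1 = m + 2 := rfl
  simp only [Ahat, show m + 1 - 1 + 1 = m + 1 from by omega, show m + 1 + 1 = m + 2 from rfl,
    show m + 1 + 1 - 1 = m + 1 from by omega, show m + 1 - 1 = m from by omega]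
  rw [Nat.choose_succ_self_right, Nat.choose_succ_self_right]
  push_cast
  ring

lemma Ahat_diag (m : ℕ) : Ahat (m + 1) (m + 1) = -(2 * (m : ℝ) + 3) := by
  simp only [Ahat, show m + 1 - (m + 1) + 1 = 1 from by omega,
    show m + 1 + (m + 1) = 2 * m + 2 from by omega,
    show m + 1 + (m + 1) - 1 = 2 * m + 1 from by omega,
    show m + 1 - (m + 1) = 0 from by omega]
  rw [Nat.choose_one_right, Nat.choose_zero_right]
  push_cast
  ring

lemma Ahat_subdiag (k : ℕ) :
    Ahat (k + 2) (k + 1) = ((2 * k + 3).choose 2 : ℝ) + (2 * (k : ℝ) + 2) := by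
  simp only [Ahat, show k + 2 - (k + 1) + 1 = 2 from by omega,
    show k + 2 + (k + 1) = 2 * k + 3 from by omega,
    show k + 2 + (k + 1) - 1 = 2 * k + 2 from by omega,
    show k + 2 - (k + 1) = 1 from by omega]
  rw [Nat.choose_one_right]
  push_cast
  ring

lemma Ahat_rec_one (k : ℕ) : Ahat (k + 3) 1 = -2 * Ahat (k + 2) 1 - Ahat (k + 1) 1 := by
  rw [show k + 3 = (k + 2) + 1 from rfl, Ahat_one, show k + 2 = (k + 1) + 1 from rfl,
    Ahat_one, Ahat_one]
  push_cast [pow_succ]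
  ring

lemma Ahat_rec_top (k : ℕ) : Ahat (k + 3) (k + 3) = Ahat (k + 2) (k + 2) - 2 := by
  rw [show k + 3 = (k + 2) + 1 from rfl, Ahat_diag, show k + 2 = (k + 1) + 1 from rfl, Ahat_diag]
  push_cast
  ring

lemma Ahat_rec_top_pred (k : ℕ) :
    Ahat (k + 3) (k + 2) = Ahat (k + 2) (k + 1) - 2 * Ahat (k + 2) (k + 2) - 1 := by
  rw [show Ahat (k+3) (k+2) = Ahat ((k+1)+2) ((k+1)+1) from rfl, Ahat_subdiag, Ahat_subdiag,
    show k + 2 = (k + 1) + 1 from rfl, Ahat_diag]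
  have p1 : (2 * (k + 1) + 3).choose 2 = (2 * k + 4).choose 1 + (2 * k + 4).choose 2 :=
    Nat.choose_succ_succ' (2 * k + 4) 1
  have p2 : (2 * k + 4).choose 2 = (2 * k + 3).choose 1 + (2 * k + 3).choose 2 :=
    Nat.choose_succ_succ' (2 * k + 3) 1
  rw [show 2 * (k + 1) + 3 = 2 * k + 5 from by omega] at p1
  rw [Nat.choose_one_right] at p1 p2
  have p1' : ((2 * k + 5).choose 2 : ℝ) = (2 * k + 4) + (2 * k + 4).choose 2 := by
    exact_mod_cast congrArg (Nat.cast : ℕ → ℝ) p1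
  have p2' : ((2 * k + 4).choose 2 : ℝ) = (2 * k + 3) + (2 * k + 3).choose 2 := by
    exact_mod_cast congrArg (Nat.cast : ℕ → ℝ) p2
  rw [show 2 * (k + 1) + 3 = 2 * k + 5 from by omega]
  push_cast at p1' p2' ⊢
  linarith

lemma choose_core (n e : ℕ) :
    (n+3).choose (e+3) + (n+2).choose (e+2) + ((n+1).choose (e+1) + n.choose e)
      = (n+1).choose (e+3) + n.choose (e+2) + 2*((n+2).choose (e+2) + (n+1).choose (e+1)) := by
  have h1 := Nat.choose_succ_succ' (n+2) (e+2)
  have h2 := Nat.choose_succ_succ' (n+1) (e+2)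
  have h3 := Nat.choose_succ_succ' n (e+1)
  have h4 := Nat.choose_succ_succ' (n+1) (e+1)
  have h5 := Nat.choose_succ_succ' n e
  have h6 := Nat.choose_succ_succ' n (e+2)
  -- normalize the double-successor index forms
  simp only [show n+2+1 = n+3 from rfl, show e+2+1 = e+3 from rfl, show n+1+1 = n+2 from rfl,
    show e+1+1 = e+2 from rfl] at h1 h2 h3 h4 h5 h6
  linarith

lemma Ahat_rec_mid (m e : ℕ) :
    Ahat (m+e+4) (m+2) = Ahat (m+e+3) (m+1) - 2 * Ahat (m+e+3) (m+2) - Ahat (m+e+2) (m+2) := by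
  simp only [Ahat,
    show m+e+4 - (m+2) + 1 = e+3 from by omega,
    show m+e+4 + (m+2) = 2*m+e+6 from by omega,
    show m+e+4 + (m+2) - 1 = 2*m+e+5 from by omega,
    show m+e+4 - (m+2) = e+2 from by omega,
    show m+e+3 - (m+1) + 1 = e+3 from by omega,
    show m+e+3 + (m+1) = 2*m+e+4 from by omega,
    show m+e+3 + (m+1) - 1 = 2*m+e+3 from by omega,
    show m+e+3 - (m+1) = e+2 from by omega,
    show m+e+3 - (m+2) + 1 = e+2 from by omega,
    show m+e+3 + (m+2) = 2*m+e+5 from by omega,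
    show m+e+3 + (m+2) - 1 = 2*m+e+4 from by omega,
    show m+e+3 - (m+2) = e+1 from by omega,
    show m+e+2 - (m+2) + 1 = e+1 from by omega,
    show m+e+2 + (m+2) = 2*m+e+4 from by omega,
    show m+e+2 + (m+2) - 1 = 2*m+e+3 from by omega,
    show m+e+2 - (m+2) = e from by omega,
    show e+2+1 = e+3 from rfl, show e+1+1 = e+2 from rfl,
    show 2*m+e+6-1 = 2*m+e+5 from by omega, show 2*m+e+5-1 = 2*m+e+4 from by omega,
    show 2*m+e+4-1 = 2*m+e+3 from by omega]
  have key := choose_core (2*m+e+3) e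
  simp only [show 2*m+e+3+3 = 2*m+e+6 from by omega, show 2*m+e+3+2 = 2*m+e+5 from by omega,
    show 2*m+e+3+1 = 2*m+e+4 from by omega] at key
  have key' : ((2*m+e+6).choose (e+3) : ℝ) + (2*m+e+5).choose (e+2)
      + ((2*m+e+4).choose (e+1) + (2*m+e+3).choose e)
      = (2*m+e+4).choose (e+3) + (2*m+e+3).choose (e+2)
        + 2*((2*m+e+5).choose (e+2) + (2*m+e+4).choose (e+1)) := by
    exact_mod_cast congrArg (Nat.cast : ℕ → ℝ) key
  linear_combination ((-1:ℝ)^(e+3)) * key'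

/-- The central sum. -/
noncomputable def SS (g : ℕ) (x : ℝ) : ℝ :=
  ∑ i ∈ Finset.range g, Ahat g (i + 1) * x ^ (-(2 * (i : ℤ)))

lemma SS_rec (k : ℕ) (x : ℝ) (hx : x ≠ 0) :
    SS (k + 3) x = x ^ (-2 : ℤ) * SS (k + 2) x - 2 * SS (k + 2) x - SS (k + 1) x
      - x ^ (-(2 * ((k : ℤ) + 1))) - 2 * x ^ (-(2 * ((k : ℤ) + 2))) := by
  have e1 : x ^ (-2 : ℤ) * SS (k + 2) x
      = ∑ i ∈ Finset.range (k + 3),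
          (if i = 0 then 0 else Ahat (k + 2) i * x ^ (-(2 * (i : ℤ)))) := by
    rw [SS, Finset.mul_sum]
    conv_rhs => rw [Finset.sum_range_succ']
    simp only [Nat.add_eq_zero, one_ne_zero, and_false, if_false, if_true, reduceIte, add_zero]
    refine Finset.sum_congr rfl fun i _ => ?_
    push_cast
    rw [show (-(2 * ((i:ℤ) + 1))) = -2 + -(2 * (i:ℤ)) from by ring, zpow_add₀ hx]
    ring
  have e2 : 2 * SS (k + 2) x
      = ∑ i ∈ Finset.range (k + 3),
          (if i = k + 2 then 0 else 2 * Ahat (k + 2) (i + 1) * x ^ (-(2 * (i : ℤ)))) := by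
    rw [SS, Finset.mul_sum]
    conv_rhs => rw [Finset.sum_range_succ]
    rw [if_pos rfl, add_zero]
    refine Finset.sum_congr rfl fun i hi => ?_
    rw [if_neg (by simp at hi; omega)]
    ring
  have e3 : SS (k + 1) x
      = ∑ i ∈ Finset.range (k + 3),
          (if k + 1 ≤ i then 0 else Ahat (k + 1) (i + 1) * x ^ (-(2 * (i : ℤ)))) := by
    rw [SS]
    conv_rhs => rw [Finset.sum_range_succ, Finset.sum_range_succ]
    rw [if_pos (show k + 1 ≤ k + 2 by omega), if_pos (show k + 1 ≤ k + 1 by omega),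
      add_zero, add_zero]
    refine Finset.sum_congr rfl fun i hi => ?_
    rw [if_neg (by simp at hi; omega)]
  have e4 : x ^ (-(2 * ((k : ℤ) + 1)))
      = ∑ i ∈ Finset.range (k + 3),
          (if i = k + 1 then x ^ (-(2 * ((k : ℤ) + 1))) else 0) := by
    rw [Finset.sum_ite_eq' (Finset.range (k + 3)) (k + 1), if_pos (by simp)]
  have e5 : 2 * x ^ (-(2 * ((k : ℤ) + 2)))
      = ∑ i ∈ Finset.range (k + 3),
          (if i = k + 2 then 2 * x ^ (-(2 * ((k : ℤ) + 2))) else 0) := by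
    rw [Finset.sum_ite_eq' (Finset.range (k + 3)) (k + 2), if_pos (by simp)]
  rw [e1, e2, e3, e4, e5, SS, ← Finset.sum_sub_distrib, ← Finset.sum_sub_distrib,
    ← Finset.sum_sub_distrib, ← Finset.sum_sub_distrib]
  refine Finset.sum_congr rfl fun i hi => ?_
  simp only [Finset.mem_range] at hi
  rcases Nat.eq_or_lt_of_le (Nat.le_of_lt_succ hi) with h2 | h2
  · -- i = k + 2
    subst h2
    rw [if_neg (by omega), if_pos rfl, if_pos (by omega), if_neg (by omega), if_pos rfl,
      Ahat_rec_top, show k + 2 = k + 1 + 1 from rfl]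
    push_cast
    ring
  · rcases Nat.eq_or_lt_of_le (Nat.le_of_lt_succ h2) with h1 | h1
    · -- i = k + 1
      subst h1
      rw [if_neg (by omega), if_neg (by omega), if_pos (by omega), if_pos rfl, if_neg (by omega),
        show k + 1 + 1 = k + 2 from rfl, show k + 3 = k + 2 + 1 from rfl]
      rw [Ahat_rec_top_pred]
      push_cast
      ring
    · -- i ≤ k
      rcases Nat.eq_zero_or_pos i with h0 | h0
      · subst h0
        rw [if_pos rfl, if_neg (by omega), if_neg (by omega), if_neg (by omega),
          if_neg (by omega), Ahat_rec_one]
        push_cast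
        ring
      · obtain ⟨m, rfl⟩ := Nat.exists_eq_add_of_le h0
        obtain ⟨e, he⟩ : ∃ e, k = m + 1 + e := ⟨k - m - 1, by omega⟩
        rw [if_neg (by omega), if_neg (by omega), if_neg (by omega), if_neg (by omega),
          if_neg (by omega)]
        have := Ahat_rec_mid m e
        rw [show m + e + 4 = k + 3 from by omega, show m + e + 3 = k + 2 from by omega,
          show m + e + 2 = k + 1 from by omega, show m + 2 = 1 + m + 1 from by omega,
          show m + 1 = 1 + m from by omega] at this
        rw [this]
        ring

lemma T_rec4 (n : ℤ) :
    Chebyshev.T ℝ (n + 4) = (4 * X ^ 2 - 2) * Chebyshev.T ℝ (n + 2) - Chebyshev.T ℝ n := by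
  have a := Chebyshev.T_add_two ℝ (n + 2)
  have b := Chebyshev.T_add_two ℝ (n + 1)
  have c := Chebyshev.T_add_two ℝ n
  rw [show n + 2 + 2 = n + 4 from by ring, show n + 2 + 1 = n + 3 from by ring] at a
  rw [show n + 1 + 2 = n + 3 from by ring, show n + 1 + 1 = n + 2 from by ring] at b
  linear_combination a + 2 * X * b + c

/-- The main induction predicate. -/
def PP (g : ℕ) : Prop :=
  ∀ x : ℝ, x ≠ 0 →
    2 * x + SS g x + x ^ (-(2 * (g : ℤ)))
      = 2 * x * ((Chebyshev.T ℝ (2 * (g : ℤ) + 1)).eval (1 / (2 * x)) + 1)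

lemma PP_one : PP 1 := by
  intro x hx
  have hT3 : Chebyshev.T ℝ (2 * ((1 : ℕ) : ℤ) + 1) = 2 * X * (2 * X ^ 2 - 1) - X := by
    have := Chebyshev.T_add_two ℝ 1
    rw [show (1 : ℤ) + 2 = 2 * ((1:ℕ) : ℤ) + 1 from by norm_num,
      show (1 : ℤ) + 1 = 2 from by ring, Chebyshev.T_two, Chebyshev.T_one] at this
    exact this
  rw [hT3, SS]
  simp only [Finset.sum_range_one]
  rw [show Ahat 1 1 = -3 from by norm_num [Ahat]]
  simp only [eval_sub, eval_mul, eval_ofNat, eval_pow, eval_X, eval_one, Nat.cast_zero,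
    eval_sub, eval_one]
  norm_num
  field_simp
  ring

lemma PP_two : PP 2 := by
  intro x hx
  have h3 := Chebyshev.T_add_two ℝ 1
  have h4 := Chebyshev.T_add_two ℝ 2
  have h5 := Chebyshev.T_add_two ℝ 3
  rw [show (1 : ℤ) + 2 = 3 from by ring, show (1 : ℤ) + 1 = 2 from by ring] at h3
  rw [show (2 : ℤ) + 2 = 4 from by ring, show (2 : ℤ) + 1 = 3 from by ring] at h4
  rw [show (3 : ℤ) + 2 = 5 from by ring, show (3 : ℤ) + 1 = 4 from by ring] at h5
  have hT5 : Chebyshev.T ℝ (2 * ((2 : ℕ) : ℤ) + 1)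
      = 2 * X * (2 * X * (2 * X * (2 * X ^ 2 - 1) - X) - (2 * X ^ 2 - 1))
        - (2 * X * (2 * X ^ 2 - 1) - X) := by
    rw [show 2 * ((2:ℕ) : ℤ) + 1 = 5 from by norm_num, h5, h4, h3, Chebyshev.T_two,
      Chebyshev.T_one]
  rw [hT5, SS]
  rw [Finset.sum_range_succ, Finset.sum_range_one]
  rw [show Ahat 2 1 = 5 from by norm_num [Ahat], show Ahat 2 2 = -5 from by norm_num [Ahat]]
  simp only [eval_sub, eval_mul, eval_ofNat, eval_pow, eval_X, eval_one, Nat.cast_zero,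
    Nat.cast_one]
  norm_num
  field_simp
  ring

lemma zpow_neg_two_mul (x : ℝ) (hx : x ≠ 0) (m : ℕ) :
    x ^ (-(2 * (m : ℤ))) = (x ^ (2 * m))⁻¹ := by
  rw [← zpow_natCast x (2 * m), ← zpow_neg]
  congr 1
  all_goals push_cast; ring

lemma PP_step (k : ℕ) (h1 : PP (k + 1)) (h2 : PP (k + 2)) : PP (k + 3) := by
  intro x hx
  have A2 := h2 x hx
  have A1 := h1 x hx
  -- evaluated Chebyshev recurrence
  have hT := congrArg (eval (1 / (2 * x))) (T_rec4 (2 * (k : ℤ) + 3))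
  rw [show 2 * (k : ℤ) + 3 + 4 = 2 * (k : ℤ) + 7 from by ring,
    show 2 * (k : ℤ) + 3 + 2 = 2 * (k : ℤ) + 5 from by ring] at hT
  simp only [eval_sub, eval_mul, eval_pow, eval_ofNat, eval_X] at hT
  -- index normalization
  rw [show (2 * ((k : ℕ) + 3 : ℕ) + 1 : ℤ) = 2 * (k : ℤ) + 7 from by push_cast; ring] at *
  rw [show (2 * ((k : ℕ) + 2 : ℕ) + 1 : ℤ) = 2 * (k : ℤ) + 5 from by push_cast; ring] at A2
  rw [show (2 * ((k : ℕ) + 1 : ℕ) + 1 : ℤ) = 2 * (k : ℤ) + 3 from by push_cast; ring] at A1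
  rw [SS_rec k x hx, hT]
  have hS2 : SS (k + 2) x
      = 2 * x * ((Chebyshev.T ℝ (2 * (k : ℤ) + 5)).eval (1 / (2 * x)) + 1)
        - 2 * x - x ^ (-(2 * (((k : ℕ) + 2 : ℕ) : ℤ))) := by linarith
  have hS1 : SS (k + 1) x
      = 2 * x * ((Chebyshev.T ℝ (2 * (k : ℤ) + 3)).eval (1 / (2 * x)) + 1)
        - 2 * x - x ^ (-(2 * (((k : ℕ) + 1 : ℕ) : ℤ))) := by linarith
  rw [hS2, hS1]
  -- power normalization
  have e1 : x ^ (-(2 * ((k : ℤ) + 1))) = (x ^ (2 * (k + 1)))⁻¹ := by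
    rw [← zpow_neg_two_mul x hx (k + 1)]
    congr 1
    all_goals push_cast; ring
  have e2 : x ^ (-(2 * ((k : ℤ) + 2))) = (x ^ (2 * (k + 2)))⁻¹ := by
    rw [← zpow_neg_two_mul x hx (k + 2)]
    congr 1
    all_goals push_cast; ring
  have e1' : x ^ (-(2 * (((k : ℕ) + 1 : ℕ) : ℤ))) = (x ^ (2 * (k + 1)))⁻¹ :=
    zpow_neg_two_mul x hx (k + 1)
  have e2' : x ^ (-(2 * (((k : ℕ) + 2 : ℕ) : ℤ))) = (x ^ (2 * (k + 2)))⁻¹ :=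
    zpow_neg_two_mul x hx (k + 2)
  have e3' : x ^ (-(2 * (((k : ℕ) + 3 : ℕ) : ℤ))) = (x ^ (2 * (k + 3)))⁻¹ :=
    zpow_neg_two_mul x hx (k + 3)
  have hv : x ^ (-2 : ℤ) = (x ^ 2)⁻¹ := by
    have := zpow_neg_two_mul x hx 1
    rw [show (-(2 * ((1 : ℕ) : ℤ))) = (-2 : ℤ) from by norm_num, mul_one] at this
    exact this
  rw [e1, e2, e1', e2', e3', hv]
  have q2 : x ^ (2 * (k + 2)) = x ^ (2 * (k + 1)) * x ^ 2 := by
    rw [show 2 * (k + 2) = 2 * (k + 1) + 2 from by ring, pow_add]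
  have q3 : x ^ (2 * (k + 3)) = x ^ (2 * (k + 1)) * x ^ 4 := by
    rw [show 2 * (k + 3) = 2 * (k + 1) + 4 from by ring, pow_add]
  rw [q2, q3]
  set t5 := (Chebyshev.T ℝ (2 * (k : ℤ) + 5)).eval (1 / (2 * x)) with ht5
  set t3 := (Chebyshev.T ℝ (2 * (k : ℤ) + 3)).eval (1 / (2 * x)) with ht3
  set y := x ^ (2 * (k + 1)) with hy
  have hyne : y ≠ 0 := pow_ne_zero _ hx
  field_simp
  ring

lemma PP_all (g : ℕ) (hg : 1 ≤ g) : PP g := by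
  have key : ∀ m : ℕ, PP (m + 1) ∧ PP (m + 2) := by
    intro m
    induction m with
    | zero => exact ⟨PP_one, PP_two⟩
    | succ n ih => exact ⟨ih.2, PP_step n ih.1 ih.2⟩
  obtain ⟨m, rfl⟩ := Nat.exists_eq_add_of_le hg
  rw [show 1 + m = m + 1 from by omega]
  exact (key m).1

lemma formula_eq_Ahat (g j : ℕ) (hj1 : 1 ≤ j) (hj2 : j ≤ g) :
    (-1 : ℝ) ^ (g - j + 1) * ((2 * (g : ℝ) + 1) / (2 * (j : ℝ) - 1)) *
      (((g + j - 1).choose (g - j + 1)) : ℝ) = Ahat g j := by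
  obtain ⟨i, rfl⟩ := Nat.exists_eq_add_of_le hj1
  obtain ⟨d, rfl⟩ := Nat.exists_eq_add_of_le hj2
  simp only [Ahat, show 1 + i + d - (1 + i) + 1 = d + 1 from by omega,
    show 1 + i + d + (1 + i) = 2 * i + d + 2 from by omega,
    show 1 + i + d + (1 + i) - 1 = 2 * i + d + 1 from by omega,
    show 1 + i + d - (1 + i) = d from by omega,
    show 2 * i + d + 2 - 1 = 2 * i + d + 1 from by omega]
  have hp := Nat.choose_succ_succ' (2 * i + d + 1) d
  rw [show 2 * i + d + 1 + 1 = 2 * i + d + 2 from by omega,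
    show d + 1 = d + 1 from rfl] at hp
  have hp' : ((2 * i + d + 2).choose (d + 1) : ℝ)
      = ((2 * i + d + 1).choose d : ℝ) + ((2 * i + d + 1).choose (d + 1) : ℝ) := by
    exact_mod_cast congrArg (Nat.cast (R := ℝ)) hp
  have hcr := Nat.choose_succ_right_eq (2 * i + d + 1) d
  rw [show 2 * i + d + 1 - d = 2 * i + 1 from by omega] at hcr
  have hcr' : ((2 * i + d + 1).choose (d + 1) : ℝ) * ((d : ℝ) + 1)
      = ((2 * i + d + 1).choose d : ℝ) * (2 * (i : ℝ) + 1) := by exact_mod_cast hcr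
  have hne : 2 * (((1 + i : ℕ) : ℝ)) - 1 ≠ 0 := by
    push_cast
    nlinarith [Nat.cast_nonneg (α := ℝ) i]
  have key : (2 * ((((1 + i + d : ℕ)) : ℝ)) + 1) / (2 * (((1 + i : ℕ) : ℝ)) - 1) *
      (((2 * i + d + 1).choose (d + 1)) : ℝ)
      = ((2 * i + d + 2).choose (d + 1) : ℝ) + ((2 * i + d + 1).choose d : ℝ) := by
    rw [div_mul_eq_mul_div, div_eq_iff hne]
    push_cast
    linear_combination 2 * hcr' - (2 * (i : ℝ) + 1) * hp'
  rw [mul_assoc, key]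


/-- For every integer `g ≥ 1`, with
`â_j = (−1)^{g−j+1} ((2g+1)/(2j−1)) C(g+j−1, g−j+1)` for `j = 1,…,g`, the identity
`x + x + Σ_{j=1}^g â_j x^{2(1−j)} + x^{−2g} = 2x (T_{2g+1}(1/(2x)) + 1)`
holds for all `x ≠ 0`; i.e. `F^{â}_{g,g}(x,x) = 2x (T_{2g+1}(1/(2x)) + 1)` where
`F^{a}_{g,g}(x,y) = x + y + Σ_{j=1}^g a_j x^{1−j} y^{1−j} + x^{−g} y^{−g}`. -/
theorem stmt3 (g : ℕ) (hg : 1 ≤ g) (ahat : ℕ → ℝ)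
    (hahat : ∀ j ∈ Finset.Icc 1 g,
      ahat j = (-1 : ℝ) ^ (g - j + 1) * ((2 * g + 1) / (2 * j - 1)) *
        (Nat.choose (g + j - 1) (g - j + 1) : ℝ)) :
    ∀ x : ℝ, x ≠ 0 →
      x + x + (∑ j ∈ Finset.Icc 1 g, ahat j * x ^ (2 * (1 - (j : ℤ)))) + x ^ (-(2 * (g : ℤ)))
        = 2 * x * ((Chebyshev.T ℝ (2 * (g : ℤ) + 1)).eval (1 / (2 * x)) + 1) := by
  intro x hx
  have hsum : ∑ j ∈ Finset.Icc 1 g, ahat j * x ^ (2 * (1 - (j : ℤ))) = SS g x := by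
    rw [SS, ← Finset.Ico_add_one_right_eq_Icc, Finset.sum_Ico_eq_sum_range]
    rw [show g + 1 - 1 = g from rfl]
    refine Finset.sum_congr rfl fun i hi => ?_
    simp only [Finset.mem_range] at hi
    have h1 : 1 + i ∈ Finset.Icc 1 g := by
      simp only [Finset.mem_Icc]
      omega
    rw [hahat _ h1, formula_eq_Ahat g (1 + i) (by omega) (by omega),
      show (1 + i) = i + 1 from by omega,
      show (2 * (1 - (((i + 1 : ℕ)) : ℤ))) = -(2 * (i : ℤ)) from by push_cast; ring]
  have hP := PP_all g hg x hx
  rw [hsum]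
  linarith [hP]
end

section
/- Let g ≥ 1 and let F(x,y) = x + y + Σ_{ℓ=1}^g a_ℓ x^{−ℓ+1} + x^{−2g+1} y^{−1} be a Laurent polynomial over ℂ. If the affine curve F = 0 in (ℂ*)² has exactly g singular points, then each singular point is a node (i.e. the Hessian of F is nondegenerate there). -/
/-!
Write `F = u + v + A(u) + u^k v⁻¹` with `k = 1 - 2g` and `A(u) = Σ a_ℓ u^{1-ℓ}`. At a singular
point `u^k = v²`, `A = -u - 2v` and `A' = -1 - k v / u`; feeding these into
`P = 2g + 1 + (2g - 1) A / u + 2 A'` gives `P(u) = 0`, and into its derivative gives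
`P'(u) = v · Hess F (u, v)`. The `u`-coordinates of the `g` singular points are distinct (as `v` is
determined by `u`), so they are `g` roots of the nonzero polynomial `u^g P(u)` of degree at most
`g`, hence simple: `(u^g P)'(u) = u^g P'(u) ≠ 0`.
-/

open Finset Polynomial

theorem Polynomial.eval_derivative_ne_zero_of_natDegree_le_card {R : Type*} [CommRing R]
    [IsDomain R] {p : R[X]} {S : Finset R} (hS : ∀ x ∈ S, p.eval x = 0)
    (hcard : p.natDegree ≤ S.card) (hp : p ≠ 0) {t : R} (ht : t ∈ S) :
    p.derivative.eval t ≠ 0 := by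
  classical
  have hsimple : p.rootMultiplicity t = 1 := by
    rw [← count_roots, roots_eq_of_natDegree_le_card_of_ne_zero hS hcard hp]
    exact Multiset.count_eq_one_of_mem S.nodup ht
  intro h
  have := (one_lt_rootMultiplicity_iff_isRoot hp).2 ⟨hS t ht, h⟩
  omega

section LaurentSum

variable {𝕜 ι : Type*} [NontriviallyNormedField 𝕜] (s : Finset ι) (c : ι → 𝕜) (e : ι → ℤ)

noncomputable def laurentSum (x : 𝕜) : 𝕜 := ∑ i ∈ s, c i * x ^ e i

theorem hasDerivAt_laurentSum {x : 𝕜} (hx : x ≠ 0) :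
    HasDerivAt (laurentSum s c e) (laurentSum s (fun i => c i * e i) (fun i => e i - 1) x) x := by
  refine HasDerivAt.fun_sum fun i _ => ?_
  exact ((hasDerivAt_zpow (e i) x (Or.inl hx)).const_mul (c i)).congr_deriv (mul_assoc _ _ _).symm

end LaurentSum

noncomputable def hessian (F : ℂ → ℂ → ℂ) (u v : ℂ) : ℂ :=
  deriv (fun x => deriv (fun x' => F x' v) x) u * deriv (fun y => deriv (fun y' => F u y') y) v -
    (deriv (fun y => deriv (fun x => F x y) u) v) ^ 2

section Curve

variable {F : ℂ → ℂ → ℂ} {A A' A'' : ℂ → ℂ} {k : ℤ} {u v : ℂ}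

theorem hasDerivAt_curve_fst (hF : ∀ u v, F u v = u + v + A u + u ^ k * v⁻¹)
    (hA : HasDerivAt A (A' u) u) (hu : u ≠ 0) (v : ℂ) :
    HasDerivAt (fun x => F x v) (1 + A' u + k * u ^ (k - 1) * v⁻¹) u := by
  simp only [hF]
  exact ((((hasDerivAt_id u).add_const v).add hA).add
    ((hasDerivAt_zpow k u (Or.inl hu)).mul_const v⁻¹)).congr_deriv (by simp)

theorem hasDerivAt_curve_snd (hF : ∀ u v, F u v = u + v + A u + u ^ k * v⁻¹)
    (u : ℂ) (hv : v ≠ 0) :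
    HasDerivAt (fun y => F u y) (1 - u ^ k / v ^ 2) v := by
  simp only [hF]
  exact (((hasDerivAt_id v).const_add u |>.add_const (A u)).add
    ((hasDerivAt_inv hv).const_mul (u ^ k))).congr_deriv (by simp [div_eq_mul_inv, sub_eq_add_neg])

theorem hessian_curve (hF : ∀ u v, F u v = u + v + A u + u ^ k * v⁻¹)
    (hA : ∀ x ≠ 0, HasDerivAt A (A' x) x) (hA' : ∀ x ≠ 0, HasDerivAt A' (A'' x) x)
    (hu : u ≠ 0) (hv : v ≠ 0) :
    hessian F u v = (A'' u + k * (k - 1) * u ^ (k - 2) * v⁻¹) * (2 * u ^ k / v ^ 3) -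
      (-(k * u ^ (k - 1)) / v ^ 2) ^ 2 := by
  have hFuu : HasDerivAt (fun x => deriv (fun x' => F x' v) x)
      (A'' u + k * (k - 1) * u ^ (k - 2) * v⁻¹) u := by
    have hev : (fun x => deriv (fun x' => F x' v) x) =ᶠ[nhds u]
        fun x => 1 + A' x + k * x ^ (k - 1) * v⁻¹ := by
      filter_upwards [eventually_ne_nhds hu] with x hx
      exact (hasDerivAt_curve_fst hF (hA x hx) hx v).deriv
    refine HasDerivAt.congr_of_eventuallyEq ?_ hev
    refine (((hA' u hu).const_add 1).add
      (((hasDerivAt_zpow (k - 1) u (Or.inl hu)).const_mul (k : ℂ)).mul_const v⁻¹)).congr_deriv ?_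
    rw [sub_sub, one_add_one_eq_two]; push_cast; ring
  have hFvv : HasDerivAt (fun y => deriv (fun y' => F u y') y) (2 * u ^ k / v ^ 3) v := by
    have hev : (fun y => deriv (fun y' => F u y') y) =ᶠ[nhds v] fun y => 1 - u ^ k / y ^ 2 := by
      filter_upwards [eventually_ne_nhds hv] with y hy
      exact (hasDerivAt_curve_snd hF u hy).deriv
    refine HasDerivAt.congr_of_eventuallyEq ?_ hev
    convert ((hasDerivAt_pow 2 v).inv (pow_ne_zero 2 hv)).const_mul (u ^ k) |>.const_sub 1 using 1
    · ext y; simp [div_eq_mul_inv]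
    · field_simp; ring
  have hFuv : HasDerivAt (fun y => deriv (fun x => F x y) u) (-(k * u ^ (k - 1)) / v ^ 2) v := by
    have hfun : (fun y => deriv (fun x => F x y) u) = fun y => 1 + A' u + k * u ^ (k - 1) * y⁻¹ :=
      funext fun y => (hasDerivAt_curve_fst hF (hA u hu) hu y).deriv
    rw [hfun]
    exact (((hasDerivAt_inv hv).const_mul ((k : ℂ) * u ^ (k - 1))).const_add (1 + A' u)).congr_deriv
      (by ring)
  rw [hessian, hFuu.deriv, hFvv.deriv, hFuv.deriv]

theorem curve_singular_eqs (hF : ∀ u v, F u v = u + v + A u + u ^ k * v⁻¹)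
    (hA : HasDerivAt A (A' u) u) (hu : u ≠ 0) (hv : v ≠ 0) (h0 : F u v = 0)
    (h1 : deriv (fun x => F x v) u = 0) (h2 : deriv (fun y => F u y) v = 0) :
    u ^ k = v ^ 2 ∧ A u = -u - 2 * v ∧ A' u = -1 - k * v / u := by
  rw [(hasDerivAt_curve_fst hF hA hu v).deriv] at h1
  rw [(hasDerivAt_curve_snd hF u hv).deriv] at h2
  have hk : u ^ k = v ^ 2 := by field_simp at h2; linear_combination -h2
  rw [hF, hk] at h0
  rw [zpow_sub_one₀ hu, hk] at h1
  refine ⟨hk, ?_, ?_⟩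
  · field_simp at h0; linear_combination h0
  · field_simp at h1 ⊢; linear_combination h1

theorem hessian_curve_of_zpow_eq (hF : ∀ u v, F u v = u + v + A u + u ^ k * v⁻¹)
    (hA : ∀ x ≠ 0, HasDerivAt A (A' x) x) (hA' : ∀ x ≠ 0, HasDerivAt A' (A'' x) x)
    (hu : u ≠ 0) (hv : v ≠ 0) (hk : u ^ k = v ^ 2) :
    v * hessian F u v = 2 * A'' u + k * (k - 2) * v / u ^ 2 := by
  rw [hessian_curve hF hA hA' hu hv, zpow_sub₀ hu, zpow_sub_one₀ hu, hk]
  field_simp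
  ring

end Curve

section Tail
variable (g : ℕ) (a : ℕ → ℂ)

noncomputable abbrev laurentTail : ℂ → ℂ := laurentSum (Icc 1 g) a fun j => -(j : ℤ) + 1

/-- The paper's `P(u) = 2g + 1 + Σ_j (2g + 1 - 2j) a_j u^{-j}`. -/
noncomputable def auxLaurent (u : ℂ) : ℂ :=
  2 * g + 1 + ∑ j ∈ Icc 1 g, (2 * g + 1 - 2 * j) * a j * u ^ (-(j : ℤ))

noncomputable def auxPoly : ℂ[X] :=
  C (2 * g + 1 : ℂ) * X ^ g + ∑ j ∈ Icc 1 g, C ((2 * g + 1 - 2 * j) * a j) * X ^ (g - j)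

/-- The last sum is the derivative of `laurentTail g a` in the form of `hasDerivAt_laurentSum`. -/
theorem auxLaurent_eq {u : ℂ} (hu : u ≠ 0) :
    auxLaurent g a u = 2 * g + 1 + (2 * g - 1) * (laurentTail g a u * u⁻¹) +
      2 * laurentSum (Icc 1 g) (fun j => a j * (-(j : ℤ) + 1 : ℤ))
        (fun j => -(j : ℤ) + 1 - 1) u := by
  simp only [auxLaurent, laurentTail, laurentSum, mul_sum, sum_mul, add_assoc]
  rw [← sum_add_distrib]
  congr 2
  refine sum_congr rfl fun j _ => ?_
  rw [add_sub_cancel_right, zpow_add_one₀ hu]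
  field_simp
  push_cast
  ring

theorem eval_auxPoly {u : ℂ} (hu : u ≠ 0) : (auxPoly g a).eval u = u ^ g * auxLaurent g a u := by
  simp only [auxPoly, auxLaurent, eval_add, eval_mul, eval_C, eval_pow, eval_X, eval_finsetSum,
    mul_add, mul_sum]
  congr 1
  · ring
  refine sum_congr rfl fun j hj => ?_
  rw [← zpow_natCast, ← zpow_natCast, Nat.cast_sub (mem_Icc.1 hj).2, zpow_sub₀ hu, zpow_neg]
  ring

theorem natDegree_auxPoly_le : (auxPoly g a).natDegree ≤ g :=
  natDegree_add_le_of_degree_le (natDegree_C_mul_X_pow_le _ _) <|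
    natDegree_sum_le_of_forall_le _ _ fun _ _ =>
      (natDegree_C_mul_X_pow_le _ _).trans (Nat.sub_le _ _)

theorem coeff_auxPoly : (auxPoly g a).coeff g = 2 * g + 1 := by
  rw [auxPoly, coeff_add, coeff_C_mul_X_pow, if_pos rfl, finsetSum_coeff, add_eq_left]
  refine sum_eq_zero fun j hj => ?_
  rw [coeff_C_mul_X_pow, if_neg (by have := mem_Icc.1 hj; omega)]

theorem auxPoly_ne_zero : auxPoly g a ≠ 0 := by
  intro h
  have := coeff_auxPoly g a
  rw [h, coeff_zero] at this
  exact_mod_cast (2 * g).succ_ne_zero (by exact_mod_cast this.symm)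

theorem eval_derivative_auxPoly {u P' : ℂ} (hu : u ≠ 0) (hP : HasDerivAt (auxLaurent g a) P' u)
    (hroot : auxLaurent g a u = 0) : (auxPoly g a).derivative.eval u = u ^ g * P' := by
  have hev : (fun x => (auxPoly g a).eval x) =ᶠ[nhds u] fun x => x ^ g * auxLaurent g a x := by
    filter_upwards [eventually_ne_nhds hu] with x hx
    exact eval_auxPoly g a hx
  refine ((auxPoly g a).hasDerivAt u).unique ?_
  exact ((hasDerivAt_pow g u).mul hP).congr_of_eventuallyEq hev |>.congr_deriv (by simp [hroot])

end Tail

theorem auxLaurent_of_singular {g : ℕ} {a : ℕ → ℂ} {F : ℂ → ℂ → ℂ} {u v : ℂ}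
    (hF : ∀ u v, F u v = u + v + laurentTail g a u + u ^ (-(2 * (g : ℤ)) + 1) * v⁻¹)
    (hu : u ≠ 0) (hv : v ≠ 0) (h0 : F u v = 0)
    (h1 : deriv (fun x => F x v) u = 0) (h2 : deriv (fun y => F u y) v = 0) :
    auxLaurent g a u = 0 ∧ laurentTail g a u = -u - 2 * v ∧
      HasDerivAt (auxLaurent g a) (v * hessian F u v) u := by
  have hA : ∀ x ≠ 0, HasDerivAt (laurentTail g a) _ x := fun x hx => hasDerivAt_laurentSum _ _ _ hx
  obtain ⟨hk, hAu, hA'u⟩ := curve_singular_eqs hF (hA u hu) hu hv h0 h1 h2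
  have hH := hessian_curve_of_zpow_eq hF hA (fun x hx => hasDerivAt_laurentSum _ _ _ hx) hu hv hk
  have hev := Filter.eventuallyEq_of_mem (compl_singleton_mem_nhds hu)
    fun x (hx : x ≠ 0) => auxLaurent_eq g a hx
  have hP := ((((hA u hu).mul (hasDerivAt_inv hu)).const_mul (2 * g - 1 : ℂ)).const_add
    (2 * g + 1 : ℂ)).add ((hasDerivAt_laurentSum _ _ _ hu).const_mul 2) |>.congr_of_eventuallyEq hev
  refine ⟨?_, hAu, hP.congr_deriv ?_⟩
  · rw [auxLaurent_eq g a hu, hAu, hA'u]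
    field_simp
    push_cast
    ring
  · rw [hH, hAu, hA'u]
    field_simp
    push_cast
    ring

/-- Let `g ≥ 1` and `F(u,v) = u + v + Σ_{ℓ=1}^g a_ℓ u^{−ℓ+1} + u^{−2g+1} v^{−1}`.
If the affine curve `F = 0` in `(ℂ*)²` has exactly `g` singular points (points where `F` and
both partial derivatives vanish), then each singular point is a node, i.e. the Hessian
determinant `∂_{uu}F ∂_{vv}F − (∂_{uv}F)²` is nonzero there. -/
theorem stmt4 (g : ℕ) (hg : 1 ≤ g) (a : ℕ → ℂ) (F : ℂ → ℂ → ℂ)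
    (hF : ∀ u v : ℂ, F u v =
      u + v + (∑ ℓ ∈ Finset.Icc 1 g, a ℓ * u ^ (-(ℓ : ℤ) + 1)) +
        u ^ (-(2 * (g : ℤ)) + 1) * v⁻¹)
    (S : Set (ℂ × ℂ))
    (hS : S = {p : ℂ × ℂ | p.1 ≠ 0 ∧ p.2 ≠ 0 ∧ F p.1 p.2 = 0 ∧
      deriv (fun u => F u p.2) p.1 = 0 ∧ deriv (fun v => F p.1 v) p.2 = 0})
    (hcard : S.ncard = g) :
    ∀ p ∈ S,
      deriv (fun u => deriv (fun u' => F u' p.2) u) p.1 *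
          deriv (fun v => deriv (fun v' => F p.1 v') v) p.2 -
        (deriv (fun v => deriv (fun u => F u v) p.1) p.2) ^ 2 ≠ 0 := by
  have hspec : ∀ p ∈ S, auxLaurent g a p.1 = 0 ∧ laurentTail g a p.1 = -p.1 - 2 * p.2 ∧
      HasDerivAt (auxLaurent g a) (p.2 * hessian F p.1 p.2) p.1 := by
    rintro p hp
    rw [hS] at hp
    exact auxLaurent_of_singular hF hp.1 hp.2.1 hp.2.2.1 hp.2.2.2.1 hp.2.2.2.2
  have hfin : S.Finite := Set.finite_of_ncard_pos (by omega)
  have hinj : Set.InjOn Prod.fst S := fun p hp q hq hpq => by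
    have hp' := (hspec p hp).2.1
    have hq' := (hspec q hq).2.1
    rw [hpq] at hp'
    exact Prod.ext hpq (by linear_combination (hp' - hq') / 2)
  set T := hfin.toFinset.image Prod.fst
  have hT : T.card = g := by
    rw [card_image_of_injOn (by simpa using hinj), ← Set.ncard_eq_toFinset_card S hfin, hcard]
  have hroots : ∀ t ∈ T, (auxPoly g a).eval t = 0 := by
    simp only [T, mem_image, Set.Finite.mem_toFinset]
    rintro _ ⟨p, hp, rfl⟩
    rw [eval_auxPoly g a (hS ▸ hp).1, (hspec p hp).1, mul_zero]
  intro p hp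
  have hsimple := eval_derivative_ne_zero_of_natDegree_le_card hroots
    (hT ▸ natDegree_auxPoly_le g a) (auxPoly_ne_zero g a)
    (mem_image_of_mem Prod.fst (hfin.mem_toFinset.2 hp))
  rw [eval_derivative_auxPoly g a (hS ▸ hp).1 (hspec p hp).2.2 (hspec p hp).1] at hsimple
  exact right_ne_zero_of_mul (right_ne_zero_of_mul hsimple)
end

section
/- Any singular point (x₀, y₀) ∈ (ℂ*)² of the curve F^{a}_{g,g}(x,y) = 0, where F^{a}_{g,g}(x,y) = x + y + Σ_{j=1}^g a_j x^{1−j} y^{1−j} + x^{−g} y^{−g}, satisfies x₀ = y₀. -/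
/-!
Since `x^k y^k = (xy)^k`, the curve has the shape `F x y = x + y + h (x y)` for the one-variable
Laurent polynomial `h t = Σ_{j=1}^g a_j t^{1-j} + t^{-g}`. Hence `∂_x F = 1 + h'(xy) y` and
`∂_y F = 1 + h'(xy) x`; at a singular point both vanish, so `h'(xy) (x - y) = 0` with `h'(xy) ≠ 0`.
-/

section

variable {𝕜 : Type*} [NontriviallyNormedField 𝕜] {h : 𝕜 → 𝕜} {h' x y : 𝕜}

theorem hasDerivAt_add_add_comp_mul_left (hh : HasDerivAt h h' (x * y)) :
    HasDerivAt (fun x => x + y + h (x * y)) (1 + h' * y) x :=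
  ((hasDerivAt_id x).add_const y).add (hh.comp x ((hasDerivAt_id x).mul_const y) |>.congr_deriv
    (by simp))

theorem hasDerivAt_add_add_comp_mul_right (hh : HasDerivAt h h' (x * y)) :
    HasDerivAt (fun y => x + y + h (x * y)) (1 + h' * x) y :=
  ((hasDerivAt_id y).const_add x).add (hh.comp y ((hasDerivAt_id y).const_mul x) |>.congr_deriv
    (by simp))

theorem eq_of_deriv_add_add_comp_mul_eq_zero (hh : DifferentiableAt 𝕜 h (x * y))
    (hdx : deriv (fun x => x + y + h (x * y)) x = 0)
    (hdy : deriv (fun y => x + y + h (x * y)) y = 0) : x = y := by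
  rw [(hasDerivAt_add_add_comp_mul_left hh.hasDerivAt).deriv] at hdx
  rw [(hasDerivAt_add_add_comp_mul_right hh.hasDerivAt).deriv] at hdy
  have hh' : deriv h (x * y) ≠ 0 := by
    rintro h0
    simp [h0] at hdx
  exact sub_eq_zero.mp <| (mul_eq_zero.mp (by linear_combination hdy - hdx)).resolve_left hh'

end

theorem stmt5_general (g : ℕ) (a : ℕ → ℂ) (F : ℂ → ℂ → ℂ)
    (hF : ∀ x y : ℂ, F x y =
      x + y + (∑ j ∈ Finset.Icc 1 g, a j * x ^ (1 - (j : ℤ)) * y ^ (1 - (j : ℤ))) +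
        x ^ (-(g : ℤ)) * y ^ (-(g : ℤ)))
    (x₀ y₀ : ℂ) (hx₀ : x₀ ≠ 0) (hy₀ : y₀ ≠ 0)
    (hdx : deriv (fun x => F x y₀) x₀ = 0)
    (hdy : deriv (fun y => F x₀ y) y₀ = 0) :
    x₀ = y₀ := by
  set h : ℂ → ℂ := fun t => ∑ j ∈ Finset.Icc 1 g, a j * t ^ (1 - (j : ℤ)) + t ^ (-(g : ℤ))
  have hFh : F = fun x y => x + y + h (x * y) := by
    ext x y
    simp only [hF, h, mul_zpow, mul_assoc, add_assoc]
  have hxy : x₀ * y₀ ≠ 0 := mul_ne_zero hx₀ hy₀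
  have hh : DifferentiableAt ℂ h (x₀ * y₀) := by
    fun_prop (disch := exact Or.inl hxy)
  subst hFh
  exact eq_of_deriv_add_add_comp_mul_eq_zero hh hdx hdy

/-- Any singular point `(x₀,y₀) ∈ (ℂ*)²` of the curve
`F^{a}_{g,g}(x,y) = x + y + Σ_{j=1}^g a_j x^{1−j} y^{1−j} + x^{−g} y^{−g} = 0`
satisfies `x₀ = y₀`. -/
theorem stmt5 (g : ℕ) (hg : 1 ≤ g) (a : ℕ → ℂ) (F : ℂ → ℂ → ℂ)
    (hF : ∀ x y : ℂ, F x y =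
      x + y + (∑ j ∈ Finset.Icc 1 g, a j * x ^ (1 - (j : ℤ)) * y ^ (1 - (j : ℤ))) +
        x ^ (-(g : ℤ)) * y ^ (-(g : ℤ)))
    (x₀ y₀ : ℂ) (hx₀ : x₀ ≠ 0) (hy₀ : y₀ ≠ 0)
    (hFv : F x₀ y₀ = 0)
    (hdx : deriv (fun x => F x y₀) x₀ = 0)
    (hdy : deriv (fun y => F x₀ y) y₀ = 0) :
    x₀ = y₀ :=
  stmt5_general g a F hF x₀ y₀ hx₀ hy₀ hdx hdy
end

section
/- Fix g ≥ 1 and indices i ≠ j in {1,…,g}. Let μ_k = e^{2πi(g−k+1)/(2g+1)} and x̂_k = −μ_k^{g+1}/(1+μ_k). Set θ = μ_j(μ_j·conj(μ_i) − 1)/(conj(μ_i) − μ_j). Then x̂_j·(θ−1)^{g+1} / ((θ − μ_j)(θ − μ_j²)^g) = x̂_i. -/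
/-!
With `a = μ_i`, `b = μ_j` and `conj a = a⁻¹`, clearing the denominator `1 - ab` gives
`θ - 1 = (b² - 1)/(1 - ab)`, `θ - b = b(b - 1)(1 + a)/(1 - ab)` and `θ - b² = ab(θ - 1)`,
so the left side collapses to `-1/((1 + a) aᵍ)`, which equals `x̂_i` because `a^(2g+1) = 1`.
The `μ_k` are powers `ζ^(g-k+1)` of a primitive `(2g+1)`-st root of unity `ζ` with
exponents in `[1, g]`; hence `μ_j ≠ 1` and `μ_i μ_j ≠ 1` (exponent sum in `[2, 2g]`), and
no `μ_k` is `-1` since their order is odd.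
-/

open Real

section Field

variable {K : Type*} [Field K]

theorem conifold_ratio_eq (g : ℕ) {a b θ : K} (ha : a ≠ 0) (hb : b ≠ 0)
    (hb1 : b ≠ 1) (hb2 : 1 + b ≠ 0) (ha2 : 1 + a ≠ 0) (hab : a * b ≠ 1)
    (hθ : θ = b * (b * a⁻¹ - 1) / (a⁻¹ - b)) :
    -b ^ (g + 1) / (1 + b) * (θ - 1) ^ (g + 1) / ((θ - b) * (θ - b ^ 2) ^ g)
      = -1 / ((1 + a) * a ^ g) := by
  have hD : 1 - a * b ≠ 0 := sub_ne_zero.mpr (Ne.symm hab)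
  have hθD : θ * (1 - a * b) = b * (b - a) := by
    rw [hθ, show a⁻¹ - b = (1 - a * b) / a by field_simp, div_div_eq_mul_div,
      div_mul_cancel₀ _ hD]
    field_simp
  have hθ1 : (θ - 1) * (1 - a * b) = (b - 1) * (1 + b) := by linear_combination hθD
  have hθ1_ne : θ - 1 ≠ 0 := by
    intro h
    rw [h, zero_mul, eq_comm] at hθ1
    exact mul_ne_zero (sub_ne_zero.mpr hb1) hb2 hθ1
  have hθb : θ - b = b * (1 + a) * (θ - 1) / (1 + b) := by
    rw [eq_div_iff hb2]
    refine mul_right_cancel₀ hD ?_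
    linear_combination (1 + b) * hθD - b * (1 + a) * hθ1
  have hθb2 : θ - b ^ 2 = a * b * (θ - 1) := by
    refine mul_right_cancel₀ hD ?_
    linear_combination hθD - a * b * hθ1
  rw [hθb, hθb2, mul_pow, mul_pow]
  field_simp
  ring

theorem neg_pow_succ_div_one_add_eq_of_pow_eq_one {g : ℕ} {a : K}
    (ha : a ^ (2 * g + 1) = 1) (ha2 : 1 + a ≠ 0) :
    -a ^ (g + 1) / (1 + a) = -1 / ((1 + a) * a ^ g) := by
  have ha0 : a ≠ 0 := by rintro rfl; simp at ha
  rw [div_eq_div_iff ha2 (by positivity)]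
  linear_combination -(1 + a) * ha

theorem one_add_ne_zero_of_pow_eq_one [CharZero K] {n : ℕ} (hn : Odd n) {z : K}
    (hz : z ^ n = 1) : 1 + z ≠ 0 := by
  intro h
  rw [eq_neg_of_add_eq_zero_right h, hn.neg_one_pow] at hz
  norm_num at hz

end Field

theorem Complex.conj_eq_inv_of_pow_eq_one {z : ℂ} {n : ℕ} (hz : z ^ n = 1) (hn : n ≠ 0) :
    starRingEnd ℂ z = z⁻¹ :=
  (Complex.inv_eq_conj (Complex.norm_eq_one_of_pow_eq_one hz hn)).symm

theorem Complex.exp_two_pi_I_mul_div_eq_pow (m n : ℕ) :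
    Complex.exp (2 * π * Complex.I * m / n) = Complex.exp (2 * π * Complex.I / n) ^ m := by
  rw [← Complex.exp_nat_mul]
  ring_nf

theorem stmt17_general (g i j : ℕ) (hi1 : 1 ≤ i) (hig : i ≤ g)
    (hj1 : 1 ≤ j) (hjg : j ≤ g)
    (μ : ℕ → ℂ)
    (hμ : ∀ k, μ k = Complex.exp (2 * π * Complex.I * ((g : ℝ) - k + 1) / (2 * g + 1)))
    (xh : ℕ → ℂ) (hxh : ∀ k, xh k = -(μ k) ^ (g + 1) / (1 + μ k))
    (θ : ℂ)
    (hθ : θ = μ j * (μ j * (starRingEnd ℂ) (μ i) - 1) / ((starRingEnd ℂ) (μ i) - μ j)) :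
    xh j * (θ - 1) ^ (g + 1) / ((θ - μ j) * (θ - (μ j) ^ 2) ^ g) = xh i := by
  set ζ := Complex.exp (2 * π * Complex.I / (2 * g + 1 : ℕ))
  have hζ : IsPrimitiveRoot ζ (2 * g + 1) := Complex.isPrimitiveRoot_exp _ (by omega)
  have hμζ : ∀ k ≤ g, μ k = ζ ^ (g - k + 1) := by
    intro k hk
    rw [hμ, ← Complex.exp_two_pi_I_mul_div_eq_pow]
    push_cast [hk]
    ring_nf
  have hpow : ∀ k ≤ g, μ k ^ (2 * g + 1) = 1 := fun k hk => by
    rw [hμζ k hk, pow_right_comm, hζ.pow_eq_one, one_pow]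
  have hodd : Odd (2 * g + 1) := odd_two_mul_add_one g
  have hi_ne : 1 + μ i ≠ 0 := one_add_ne_zero_of_pow_eq_one hodd (hpow i hig)
  rw [hxh, hxh, neg_pow_succ_div_one_add_eq_of_pow_eq_one (hpow i hig) hi_ne]
  refine conifold_ratio_eq g (IsUnit.of_pow_eq_one (hpow i hig) (by omega)).ne_zero
    (IsUnit.of_pow_eq_one (hpow j hjg) (by omega)).ne_zero ?_
    (one_add_ne_zero_of_pow_eq_one hodd (hpow j hjg)) hi_ne ?_ ?_
  · rw [hμζ j hjg]
    exact hζ.pow_ne_one_of_pos_of_lt (by omega) (by omega)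
  · rw [hμζ i hig, hμζ j hjg, ← pow_add]
    exact hζ.pow_ne_one_of_pos_of_lt (by omega) (by omega)
  · rwa [Complex.conj_eq_inv_of_pow_eq_one (hpow i hig) (by omega)] at hθ

/-- Fix `g ≥ 1` and distinct indices `i ≠ j` in `{1,…,g}`.  Let
`μ_k = e^{2πi(g−k+1)/(2g+1)}` and `x̂_k = −μ_k^{g+1}/(1+μ_k)`.  Set
`θ = μ_j(μ_j conj(μ_i) − 1)/(conj(μ_i) − μ_j)`.  Then
`x̂_j (θ−1)^{g+1} / ((θ − μ_j)(θ − μ_j²)^g) = x̂_i`. -/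
theorem stmt17 (g i j : ℕ) (hg : 1 ≤ g) (hi1 : 1 ≤ i) (hig : i ≤ g)
    (hj1 : 1 ≤ j) (hjg : j ≤ g) (hij : i ≠ j)
    (μ : ℕ → ℂ)
    (hμ : ∀ k, μ k = Complex.exp (2 * π * Complex.I * ((g : ℝ) - k + 1) / (2 * g + 1)))
    (xh : ℕ → ℂ) (hxh : ∀ k, xh k = -(μ k) ^ (g + 1) / (1 + μ k))
    (θ : ℂ)
    (hθ : θ = μ j * (μ j * (starRingEnd ℂ) (μ i) - 1) / ((starRingEnd ℂ) (μ i) - μ j)) :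
    xh j * (θ - 1) ^ (g + 1) / ((θ - μ j) * (θ - (μ j) ^ 2) ^ g) = xh i :=
  stmt17_general g i j hi1 hig hj1 hjg μ hμ xh hxh θ hθ
end
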